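/- arXiv:1111.6641 — 3 statements merged into one kernel-verified Lean document; each statement's English description precedes it below -/
import Mathlib

section
/- Let A be a hyperbolic linear automorphism of ℝ^N with splitting ℝ^N = E^s ⊕ E^u as above, and let (y_k)_{k ∈ ℤ} be a sequence in ℝ^N such that b_k := y_{k+1} − A y_k is uniformly bounded. Then there exists a unique z ∈ ℝ^N such that the sequence (y_k − A^k z)_{k ∈ ℤ} is bounded; explicitly, z = z^u + z^s where z^u = lim_{k→∞} (A^{−k} y_k)^u and z^s = lim_{k→∞} (A^k y_{−k})^s (with v = v^s + v^u the splitting of v along E^s ⊕ E^u). -/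
/-!
Projections commuting with `A` split the pseudo-orbit into a stable and an unstable part, each a
pseudo-orbit of `A` on an invariant subspace. On the stable subspace `A` contracts, so consecutive
points of `m ↦ A^m x_{-m}` differ by `A^m` applied to an error, which is geometrically small: the
sequence converges to some `w`, and summing the same geometric series from time `-∞` to `k` bounds
`‖x_k - A^k w‖`. Any other shadowing point differs from `w` by a stable vector with bounded
backward orbit, which must vanish. The unstable part is the stable part of `A⁻¹` for the
time-reversed sequence.
-/

open Filter Topology Bornology Set

section Splitting

variable {R M : Type*} [Ring R] [AddCommGroup M] [Module R M] {Es Eu : Submodule R M}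

theorem Submodule.eq_of_add_eq_add_of_disjoint (h : Disjoint Es Eu) {a a' b b' : M}
    (ha : a ∈ Es) (ha' : a' ∈ Es) (hb : b ∈ Eu) (hb' : b' ∈ Eu) (hab : a + b = a' + b') :
    a = a' := by
  have hab' : a - a' = b' - b := by rw [sub_eq_sub_iff_add_eq_add, hab, add_comm]
  exact sub_eq_zero.1 <| Submodule.disjoint_def.1 h _ (sub_mem ha ha') (hab' ▸ sub_mem hb' hb)

variable {πs πu : M →ₗ[R] M}

theorem apply_add_eq_of_split (h : Disjoint Es Eu) (hπs : ∀ v, πs v ∈ Es) (hπu : ∀ v, πu v ∈ Eu)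
    (hsplit : ∀ v, πs v + πu v = v) {a b : M} (ha : a ∈ Es) (hb : b ∈ Eu) : πs (a + b) = a :=
  Submodule.eq_of_add_eq_add_of_disjoint h (hπs _) ha (hπu _) hb (hsplit _)

theorem apply_comm_of_split (h : Disjoint Es Eu) (hπs : ∀ v, πs v ∈ Es) (hπu : ∀ v, πu v ∈ Eu)
    (hsplit : ∀ v, πs v + πu v = v) {f : M →ₗ[R] M} (hfs : ∀ v ∈ Es, f v ∈ Es)
    (hfu : ∀ v ∈ Eu, f v ∈ Eu) (v : M) : πs (f v) = f (πs v) := by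
  conv_lhs => rw [← hsplit v, map_add]
  exact apply_add_eq_of_split h hπs hπu hsplit (hfs _ (hπs v)) (hfu _ (hπu v))

theorem apply_eq_and_apply_eq_iff_of_split (h : Disjoint Es Eu) (hπs : ∀ v, πs v ∈ Es)
    (hπu : ∀ v, πu v ∈ Eu) (hsplit : ∀ v, πs v + πu v = v) {a b z : M} (ha : a ∈ Es)
    (hb : b ∈ Eu) : πs z = a ∧ πu z = b ↔ z = a + b := by
  refine ⟨fun ⟨hza, hzb⟩ => hza ▸ hzb ▸ (hsplit z).symm, ?_⟩
  rintro rfl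
  refine ⟨apply_add_eq_of_split h hπs hπu hsplit ha hb, ?_⟩
  rw [add_comm]
  exact apply_add_eq_of_split h.symm hπu hπs (fun v => by rw [add_comm, hsplit]) hb ha

end Splitting

namespace LinearEquiv

variable {K V : Type*} [DivisionRing K] [AddCommGroup V] [Module K V]

theorem zpow_add_apply (A : V ≃ₗ[K] V) (m n : ℤ) (v : V) :
    (A ^ (m + n)) v = (A ^ m) ((A ^ n) v) := by
  rw [zpow_add]; rfl

theorem zpow_apply_mem {A : V ≃ₗ[K] V} {W : Submodule K V} [FiniteDimensional K W]
    (hAW : ∀ v ∈ W, A v ∈ W) (n : ℤ) {v : V} (hv : v ∈ W) : (A ^ n) v ∈ W := by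
  have hmap : W.map (A : V →ₗ[K] V) = W :=
    Submodule.eq_of_le_of_finrank_le (by rintro _ ⟨w, hw, rfl⟩; exact hAW w hw)
      (by rw [LinearEquiv.finrank_map_eq])
  have hA_symm : ∀ v ∈ W, A.symm v ∈ W := by
    intro v hv
    rw [← hmap] at hv
    obtain ⟨w, hw, rfl⟩ := hv
    simpa using hw
  induction n using Int.induction_on generalizing v with
  | zero => simpa using hv
  | succ k ih => rw [zpow_add_apply, zpow_one]; exact ih (hAW v hv)
  | pred k ih => rw [sub_eq_add_neg, zpow_add_apply, zpow_neg_one]; exact ih (hA_symm v hv)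

theorem zpow_apply_comm_of_split [FiniteDimensional K V] {Es Eu : Submodule K V}
    {πs πu : V →ₗ[K] V} (h : Disjoint Es Eu) (hπs : ∀ v, πs v ∈ Es) (hπu : ∀ v, πu v ∈ Eu)
    (hsplit : ∀ v, πs v + πu v = v) {A : V ≃ₗ[K] V} (hAs : ∀ v ∈ Es, A v ∈ Es)
    (hAu : ∀ v ∈ Eu, A v ∈ Eu) (n : ℤ) (v : V) : πs ((A ^ n) v) = (A ^ n) (πs v) :=
  apply_comm_of_split h hπs hπu hsplit (f := (A ^ n).toLinearMap)
    (fun _ => zpow_apply_mem hAs n) (fun _ => zpow_apply_mem hAu n) v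

end LinearEquiv

section Contracting

variable {𝕜 E : Type*} [NontriviallyNormedField 𝕜] [NormedAddCommGroup E] [NormedSpace 𝕜 E]
  {A : E ≃ₗ[𝕜] E} {V : Submodule 𝕜 E} {C η : ℝ} {x : ℤ → E} {B : ℝ}

theorem dist_zpow_apply_sub_le (hC : 0 ≤ C) (hη0 : 0 ≤ η)
    (hcontr : ∀ v ∈ V, ∀ n : ℕ, ‖(A ^ n) v‖ ≤ C * η ^ n * ‖v‖)
    (hstep : ∀ k, x (k + 1) - A (x k) ∈ V) (hB : ∀ k, ‖x (k + 1) - A (x k)‖ ≤ B) (k : ℤ) (m : ℕ) :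
    dist ((A ^ (m : ℤ)) (x (k - m))) ((A ^ ((m + 1 : ℕ) : ℤ)) (x (k - (m + 1 : ℕ)))) ≤
      C * B * η ^ m := by
  have hk : k - m = k - (m + 1 : ℕ) + 1 := by push_cast; ring
  rw [dist_eq_norm, Nat.cast_succ, LinearEquiv.zpow_add_apply, zpow_one, ← map_sub, hk,
    zpow_natCast]
  calc _ ≤ C * η ^ m * ‖x (k - (m + 1 : ℕ) + 1) - A (x (k - (m + 1 : ℕ)))‖ := hcontr _ (hstep _) m
    _ ≤ C * η ^ m * B := by gcongr; exact hB _
    _ = C * B * η ^ m := by ring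

variable [FiniteDimensional 𝕜 E]

theorem eq_zero_of_forall_norm_zpow_neg_le (hAV : ∀ v ∈ V, A v ∈ V) (hC : 0 ≤ C)
    (hη0 : 0 ≤ η) (hη1 : η < 1) (hcontr : ∀ v ∈ V, ∀ n : ℕ, ‖(A ^ n) v‖ ≤ C * η ^ n * ‖v‖)
    {v : E} (hv : v ∈ V) {R : ℝ} (hR : ∀ n : ℕ, ‖(A ^ (-(n : ℤ))) v‖ ≤ R) : v = 0 := by
  have hle : ∀ n : ℕ, ‖v‖ ≤ C * R * η ^ n := fun n => calc
    ‖v‖ = ‖(A ^ n) ((A ^ (-(n : ℤ))) v)‖ := by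
      rw [← zpow_natCast, ← LinearEquiv.zpow_add_apply, add_neg_cancel, zpow_zero]; rfl
    _ ≤ C * η ^ n * ‖(A ^ (-(n : ℤ))) v‖ := hcontr _ (LinearEquiv.zpow_apply_mem hAV _ hv) n
    _ ≤ C * η ^ n * R := by gcongr; exact hR n
    _ = C * R * η ^ n := by ring
  have hlim : Tendsto (fun n : ℕ => C * R * η ^ n) atTop (𝓝 0) := by
    simpa using (tendsto_pow_atTop_nhds_zero_of_lt_one hη0 hη1).const_mul (C * R)
  exact norm_le_zero_iff.1 (ge_of_tendsto' hlim hle)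

variable [CompleteSpace 𝕜]

theorem isBounded_range_iff_of_split {ι : Type*} {πs πu : E →ₗ[𝕜] E}
    (hsplit : ∀ v, πs v + πu v = v) (f : ι → E) :
    IsBounded (range f) ↔ IsBounded (range (πs ∘ f)) ∧ IsBounded (range (πu ∘ f)) := by
  refine ⟨fun hf => ?_, fun ⟨hs, hu⟩ => (hs.add hu).subset ?_⟩
  · simp only [range_comp]
    exact ⟨(LinearMap.toContinuousLinearMap πs).lipschitz.isBounded_image hf,
      (LinearMap.toContinuousLinearMap πu).lipschitz.isBounded_image hf⟩
  · rintro _ ⟨k, rfl⟩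
    exact ⟨_, ⟨k, rfl⟩, _, ⟨k, rfl⟩, hsplit (f k)⟩

theorem tendsto_zpow_apply_sub {w : E} (hw : Tendsto (fun m : ℤ => (A ^ m) (x (-m))) atTop (𝓝 w))
    (k : ℤ) : Tendsto (fun m : ℕ => (A ^ (m : ℤ)) (x (k - m))) atTop (𝓝 ((A ^ k) w)) := by
  have hcont : Continuous (A ^ k) := LinearMap.continuous_of_finiteDimensional (A ^ k).toLinearMap
  refine ((hcont.tendsto w).comp (hw.comp (tendsto_atTop_add_const_right _ (-k)
    tendsto_natCast_atTop_atTop))).congr fun m => ?_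
  simp only [Function.comp_apply, ← LinearEquiv.zpow_add_apply]
  rw [show k + (m + -k) = m by ring, show -((m : ℤ) + -k) = k - m by ring]

theorem exists_tendsto_zpow_apply_neg (hC : 0 ≤ C) (hη0 : 0 ≤ η) (hη1 : η < 1)
    (hcontr : ∀ v ∈ V, ∀ n : ℕ, ‖(A ^ n) v‖ ≤ C * η ^ n * ‖v‖)
    (hstep : ∀ k, x (k + 1) - A (x k) ∈ V) (hB : ∀ k, ‖x (k + 1) - A (x k)‖ ≤ B) :
    ∃ w, Tendsto (fun m : ℤ => (A ^ m) (x (-m))) atTop (𝓝 w) := by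
  have : CompleteSpace E := FiniteDimensional.complete 𝕜 E
  obtain ⟨w, hw⟩ := cauchySeq_tendsto_of_complete <| cauchySeq_of_le_geometric η (C * B) hη1
    (dist_zpow_apply_sub_le hC hη0 hcontr hstep hB 0)
  refine ⟨w, ?_⟩
  rw [← Nat.map_cast_int_atTop, tendsto_map'_iff]
  simpa only [Function.comp_def, zero_sub] using hw

theorem exists_tendsto_and_isBounded_iff_of_contracting (hAV : ∀ v ∈ V, A v ∈ V) (hC : 0 ≤ C)
    (hη0 : 0 ≤ η) (hη1 : η < 1) (hcontr : ∀ v ∈ V, ∀ n : ℕ, ‖(A ^ n) v‖ ≤ C * η ^ n * ‖v‖)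
    (hxV : ∀ k, x k ∈ V) (hb : IsBounded (range fun k => x (k + 1) - A (x k))) :
    ∃ w ∈ V, Tendsto (fun m : ℤ => (A ^ m) (x (-m))) atTop (𝓝 w) ∧
      ∀ z ∈ V, IsBounded (range fun k : ℤ => x k - (A ^ k) z) ↔ z = w := by
  obtain ⟨B, hB⟩ := isBounded_iff_forall_norm_le.1 hb
  replace hB : ∀ k, ‖x (k + 1) - A (x k)‖ ≤ B := fun k => hB _ ⟨k, rfl⟩
  have hstep : ∀ k, x (k + 1) - A (x k) ∈ V := fun k => sub_mem (hxV _) (hAV _ (hxV k))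
  obtain ⟨w, hw⟩ := exists_tendsto_zpow_apply_neg hC hη0 hη1 hcontr hstep hB
  have hwV : w ∈ V := V.closed_of_finiteDimensional.mem_of_tendsto hw
    (Eventually.of_forall fun m => LinearEquiv.zpow_apply_mem hAV m (hxV _))
  have hshadow : ∀ k, ‖x k - (A ^ k) w‖ ≤ C * B / (1 - η) := fun k => by
    simpa [dist_eq_norm] using dist_le_of_le_geometric_of_tendsto₀ η (C * B) hη1
      (dist_zpow_apply_sub_le hC hη0 hcontr hstep hB k) (tendsto_zpow_apply_sub hw k)
  refine ⟨w, hwV, hw, fun z hz => ⟨fun hbz => ?_, ?_⟩⟩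
  · obtain ⟨R, hR⟩ := isBounded_iff_forall_norm_le.1 hbz
    refine (sub_eq_zero.1 <| eq_zero_of_forall_norm_zpow_neg_le hAV hC hη0 hη1 hcontr
      (sub_mem hz hwV) (R := C * B / (1 - η) + R) fun n => ?_)
    calc ‖(A ^ (-(n : ℤ))) (z - w)‖
        = ‖(x (-n) - (A ^ (-(n : ℤ))) w) - (x (-n) - (A ^ (-(n : ℤ))) z)‖ := by
          rw [map_sub, sub_sub_sub_cancel_left]
      _ ≤ C * B / (1 - η) + R := (norm_sub_le _ _).trans (add_le_add (hshadow _) (hR _ ⟨_, rfl⟩))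
  · rintro rfl
    exact isBounded_iff_forall_norm_le.2 ⟨_, by rintro _ ⟨k, rfl⟩; exact hshadow k⟩

theorem exists_tendsto_and_isBounded_iff_of_expanding (hAV : ∀ v ∈ V, A v ∈ V) (hC : 0 ≤ C)
    (hη0 : 0 ≤ η) (hη1 : η < 1)
    (hexp : ∀ v ∈ V, ∀ n : ℕ, ‖(A ^ (-(n : ℤ))) v‖ ≤ C * η ^ n * ‖v‖)
    (hxV : ∀ k, x k ∈ V) (hb : IsBounded (range fun k => x (k + 1) - A (x k))) :
    ∃ w ∈ V, Tendsto (fun m : ℤ => (A ^ (-m)) (x m)) atTop (𝓝 w) ∧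
      ∀ z ∈ V, IsBounded (range fun k : ℤ => x k - (A ^ k) z) ↔ z = w := by
  have hAV' : ∀ v ∈ V, A⁻¹ v ∈ V := fun v hv => by
    simpa using LinearEquiv.zpow_apply_mem hAV (-1) hv
  have hcontr : ∀ v ∈ V, ∀ n : ℕ, ‖(A⁻¹ ^ n) v‖ ≤ C * η ^ n * ‖v‖ := by
    simpa only [← zpow_natCast, inv_zpow'] using hexp
  have hb' : IsBounded (range fun k => x (-(k + 1)) - A⁻¹ (x (-k))) := by
    refine ((-(A⁻¹ : E ≃ₗ[𝕜] E).toLinearMap).toContinuousLinearMap.lipschitz.isBounded_image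
      hb).subset ?_
    rintro _ ⟨k, rfl⟩
    refine ⟨_, ⟨-(k + 1), rfl⟩, ?_⟩
    simp
  obtain ⟨w, hwV, hw, hiff⟩ := exists_tendsto_and_isBounded_iff_of_contracting hAV' hC hη0 hη1
    hcontr (x := fun k => x (-k)) (fun k => hxV _) hb'
  refine ⟨w, hwV, by simpa only [inv_zpow', neg_neg] using hw, fun z hz => ?_⟩
  rw [← hiff z hz, ← neg_surjective.range_comp]
  simp only [Function.comp_def, inv_zpow']

end Contracting

/-- Global shadowing lemma for hyperbolic linear automorphisms of ℝ^N:
every pseudo-orbit with bounded errors is shadowed by a unique genuine orbit, whose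
initial point is given explicitly by the stable/unstable limit formulas. -/
theorem hyperbolic_shadowing {N : ℕ}
    (A : (Fin N → ℝ) ≃ₗ[ℝ] (Fin N → ℝ))
    (Es Eu : Submodule ℝ (Fin N → ℝ))
    (hcompl : IsCompl Es Eu)
    (hAs : ∀ z ∈ Es, A z ∈ Es) (hAu : ∀ z ∈ Eu, A z ∈ Eu)
    (πs πu : (Fin N → ℝ) →ₗ[ℝ] (Fin N → ℝ))
    (hπs : ∀ v, πs v ∈ Es) (hπu : ∀ v, πu v ∈ Eu)
    (hsplit : ∀ v, πs v + πu v = v)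
    (C η : ℝ) (hC : 0 < C) (hη0 : 0 < η) (hη1 : η < 1)
    (hs : ∀ z ∈ Es, ∀ k : ℕ, ‖(A ^ k : (Fin N → ℝ) ≃ₗ[ℝ] (Fin N → ℝ)) z‖ ≤ C * η ^ k * ‖z‖)
    (hu : ∀ z ∈ Eu, ∀ k : ℕ, ‖(A ^ (-(k : ℤ)) : (Fin N → ℝ) ≃ₗ[ℝ] (Fin N → ℝ)) z‖ ≤ C * η ^ k * ‖z‖)
    (y : ℤ → Fin N → ℝ)
    (hb : ∃ B : ℝ, ∀ k : ℤ, ‖y (k + 1) - A (y k)‖ ≤ B) :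
    ∃ zu zs : Fin N → ℝ,
      Filter.Tendsto (fun k : ℕ =>
          πu ((A ^ (-(k : ℤ)) : (Fin N → ℝ) ≃ₗ[ℝ] (Fin N → ℝ)) (y (k : ℤ))))
        Filter.atTop (nhds zu) ∧
      Filter.Tendsto (fun k : ℕ =>
          πs ((A ^ (k : ℤ) : (Fin N → ℝ) ≃ₗ[ℝ] (Fin N → ℝ)) (y (-(k : ℤ)))))
        Filter.atTop (nhds zs) ∧
      ∀ z : Fin N → ℝ,
        Bornology.IsBounded
          (Set.range fun k : ℤ => y k - (A ^ k : (Fin N → ℝ) ≃ₗ[ℝ] (Fin N → ℝ)) z)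
        ↔ z = zu + zs := by
  have hsplit' : ∀ v, πu v + πs v = v := fun v => by rw [add_comm, hsplit]
  have hcomm_s :=
    LinearEquiv.zpow_apply_comm_of_split hcompl.disjoint hπs hπu hsplit hAs hAu
  have hcomm_u :=
    LinearEquiv.zpow_apply_comm_of_split hcompl.symm.disjoint hπu hπs hsplit' hAu hAs
  have hA_comm_s : ∀ v, πs (A v) = A (πs v) := by simpa using hcomm_s 1
  have hA_comm_u : ∀ v, πu (A v) = A (πu v) := by simpa using hcomm_u 1
  obtain ⟨B, hB⟩ := hb
  have hbd := (isBounded_range_iff_of_split hsplit fun k => y (k + 1) - A (y k)).1 <|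
    isBounded_iff_forall_norm_le.2 ⟨B, by rintro _ ⟨k, rfl⟩; exact hB k⟩
  obtain ⟨ws, hwsEs, hws, hbs⟩ := exists_tendsto_and_isBounded_iff_of_contracting hAs hC.le
    hη0.le hη1 hs (x := fun k => πs (y k)) (fun k => hπs _)
    (by simpa only [Function.comp_def, map_sub, hA_comm_s] using hbd.1)
  obtain ⟨wu, hwuEu, hwu, hbu⟩ := exists_tendsto_and_isBounded_iff_of_expanding hAu hC.le
    hη0.le hη1 hu (x := fun k => πu (y k)) (fun k => hπu _)
    (by simpa only [Function.comp_def, map_sub, hA_comm_u] using hbd.2)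
  refine ⟨wu, ws, ?_, ?_, fun z => ?_⟩
  · exact (hwu.comp tendsto_natCast_atTop_atTop).congr fun k => (hcomm_u _ _).symm
  · exact (hws.comp tendsto_natCast_atTop_atTop).congr fun k => (hcomm_s _ _).symm
  · rw [isBounded_range_iff_of_split hsplit]
    simp only [Function.comp_def, map_sub, hcomm_s, hcomm_u]
    rw [hbs _ (hπs z), hbu _ (hπu z), add_comm,
      apply_eq_and_apply_eq_iff_of_split hcompl.disjoint hπs hπu hsplit hwsEs hwuEu]
end

section
/- Let A be a hyperbolic linear automorphism of ℝ^N (splitting E^s ⊕ E^u with exponential contraction/expansion constants C, η ∈ (0,1)) and let z_k := lim_{j→∞}(A^{−j} y_{k+j})^u + lim_{j→∞}(A^j y_{k−j})^s be the shadowing point of the shifted pseudo-orbit (y_{k+i})_i, for a pseudo-orbit (y_k)_{k∈ℤ} with bounded b_k = y_{k+1} − A y_k. Then z_{k+1} = A z_k for all k ∈ ℤ. -/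
/-!
A preserves both summands of the splitting, so it commutes with the two projections. Hence A maps
the j-th approximant of the unstable (resp. stable) limit defining z k to an approximant of the
corresponding limit defining z (k + 1), shifted by one index; continuity of A and uniqueness of
limits give zu (k + 1) = A (zu k) and zs (k + 1) = A (zs k).
-/

open Filter Topology

theorem Submodule.map_proj_eq_proj_map_of_isCompl {R M : Type*} [Ring R] [AddCommGroup M]
    [Module R M] {p q : Submodule R M} (hpq : IsCompl p q) {f : M →ₗ[R] M}
    (hfp : ∀ x ∈ p, f x ∈ p) (hfq : ∀ x ∈ q, f x ∈ q) {π ρ : M →ₗ[R] M}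
    (hπ : ∀ v, π v ∈ p) (hρ : ∀ v, ρ v ∈ q) (hπρ : ∀ v, π v + ρ v = v) (v : M) :
    π (f v) = f (π v) := by
  have hdiff : π (f v) - f (π v) = f (ρ v) - ρ (f v) := by
    rw [sub_eq_sub_iff_add_eq_add, ← map_add, hπρ, add_comm, hπρ]
  have hmem_p : π (f v) - f (π v) ∈ p := p.sub_mem (hπ _) (hfp _ (hπ v))
  have hmem_q : π (f v) - f (π v) ∈ q := hdiff ▸ q.sub_mem (hfq _ (hρ v)) (hρ _)
  exact sub_eq_zero.mp (Submodule.disjoint_def.mp hpq.disjoint _ hmem_p hmem_q)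

theorem eq_map_of_tendsto_of_shift {X Y : Type*} [TopologicalSpace X] [TopologicalSpace Y]
    [T2Space Y] {f : X → Y} (hf : Continuous f) {u : ℕ → X} {v : ℕ → Y} {a : X} {b : Y}
    (hu : Tendsto u atTop (𝓝 a)) (hv : Tendsto v atTop (𝓝 b)) (m n : ℕ)
    (huv : ∀ j, v (j + m) = f (u (j + n))) : b = f a := by
  have hv' : Tendsto (fun j => v (j + m)) atTop (𝓝 b) := hv.comp (tendsto_add_atTop_nat m)
  have hfu : Tendsto (fun j => f (u (j + n))) atTop (𝓝 (f a)) :=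
    (hf.tendsto a).comp (hu.comp (tendsto_add_atTop_nat n))
  exact tendsto_nhds_unique hv' (by simpa only [huv] using hfu)

theorem hyperbolic_shadowing_shift_general {N : ℕ}
    (A : (Fin N → ℝ) ≃ₗ[ℝ] (Fin N → ℝ))
    (Es Eu : Submodule ℝ (Fin N → ℝ))
    (hcompl : IsCompl Es Eu)
    (hAs : ∀ z ∈ Es, A z ∈ Es) (hAu : ∀ z ∈ Eu, A z ∈ Eu)
    (πs πu : (Fin N → ℝ) →ₗ[ℝ] (Fin N → ℝ))
    (hπs : ∀ v, πs v ∈ Es) (hπu : ∀ v, πu v ∈ Eu)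
    (hsplit : ∀ v, πs v + πu v = v)
    (y : ℤ → Fin N → ℝ)
    (zu zs z : ℤ → Fin N → ℝ)
    (hzu : ∀ k : ℤ, Filter.Tendsto (fun j : ℕ =>
        πu ((A ^ (-(j : ℤ)) : (Fin N → ℝ) ≃ₗ[ℝ] (Fin N → ℝ)) (y (k + (j : ℤ)))))
        Filter.atTop (nhds (zu k)))
    (hzs : ∀ k : ℤ, Filter.Tendsto (fun j : ℕ =>
        πs ((A ^ (j : ℤ) : (Fin N → ℝ) ≃ₗ[ℝ] (Fin N → ℝ)) (y (k - (j : ℤ)))))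
        Filter.atTop (nhds (zs k)))
    (hz : ∀ k : ℤ, z k = zu k + zs k) :
    ∀ k : ℤ, z (k + 1) = A (z k) := by
  have hA : Continuous A := LinearMap.continuous_of_finiteDimensional A.toLinearMap
  have hπsA : ∀ v, πs (A v) = A (πs v) :=
    Submodule.map_proj_eq_proj_map_of_isCompl (f := A.toLinearMap) hcompl hAs hAu hπs hπu hsplit
  have hπuA : ∀ v, πu (A v) = A (πu v) :=
    Submodule.map_proj_eq_proj_map_of_isCompl (f := A.toLinearMap) hcompl.symm hAu hAs hπu hπs
      fun v => (add_comm _ _).trans (hsplit v)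
  intro k
  have hu : zu (k + 1) = A (zu k) := by
    refine eq_map_of_tendsto_of_shift hA (hzu k) (hzu (k + 1)) 0 1 fun j => ?_
    have hexp : -((j + 0 : ℕ) : ℤ) = 1 + -((j + 1 : ℕ) : ℤ) := by push_cast; ring
    have hidx : k + 1 + ((j + 0 : ℕ) : ℤ) = k + ((j + 1 : ℕ) : ℤ) := by push_cast; ring
    rw [hexp, hidx, zpow_one_add, LinearEquiv.mul_apply, hπuA]
  have hs : zs (k + 1) = A (zs k) := by
    refine eq_map_of_tendsto_of_shift hA (hzs k) (hzs (k + 1)) 1 0 fun j => ?_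
    have hexp : ((j + 1 : ℕ) : ℤ) = 1 + ((j + 0 : ℕ) : ℤ) := by push_cast; ring
    have hidx : k + 1 - ((j + 1 : ℕ) : ℤ) = k - ((j + 0 : ℕ) : ℤ) := by push_cast; ring
    rw [hidx, hexp, zpow_one_add, LinearEquiv.mul_apply, hπsA]
  rw [hz, hz, hu, hs, map_add]

/-- The shadowing construction intertwines the shift on pseudo-orbits with
the action of the hyperbolic automorphism A: if z k is the shadowing point of the
shifted pseudo-orbit (y (k+·)), defined by the stable/unstable limit formulas, then
z (k+1) = A (z k). -/
theorem hyperbolic_shadowing_shift {N : ℕ}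
    (A : (Fin N → ℝ) ≃ₗ[ℝ] (Fin N → ℝ))
    (Es Eu : Submodule ℝ (Fin N → ℝ))
    (hcompl : IsCompl Es Eu)
    (hAs : ∀ z ∈ Es, A z ∈ Es) (hAu : ∀ z ∈ Eu, A z ∈ Eu)
    (πs πu : (Fin N → ℝ) →ₗ[ℝ] (Fin N → ℝ))
    (hπs : ∀ v, πs v ∈ Es) (hπu : ∀ v, πu v ∈ Eu)
    (hsplit : ∀ v, πs v + πu v = v)
    (C η : ℝ) (hC : 0 < C) (hη0 : 0 < η) (hη1 : η < 1)
    (hs : ∀ z ∈ Es, ∀ k : ℕ, ‖(A ^ k : (Fin N → ℝ) ≃ₗ[ℝ] (Fin N → ℝ)) z‖ ≤ C * η ^ k * ‖z‖)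
    (hu : ∀ z ∈ Eu, ∀ k : ℕ, ‖(A ^ (-(k : ℤ)) : (Fin N → ℝ) ≃ₗ[ℝ] (Fin N → ℝ)) z‖ ≤ C * η ^ k * ‖z‖)
    (y : ℤ → Fin N → ℝ)
    (hb : ∃ B : ℝ, ∀ k : ℤ, ‖y (k + 1) - A (y k)‖ ≤ B)
    (zu zs z : ℤ → Fin N → ℝ)
    (hzu : ∀ k : ℤ, Filter.Tendsto (fun j : ℕ =>
        πu ((A ^ (-(j : ℤ)) : (Fin N → ℝ) ≃ₗ[ℝ] (Fin N → ℝ)) (y (k + (j : ℤ)))))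
        Filter.atTop (nhds (zu k)))
    (hzs : ∀ k : ℤ, Filter.Tendsto (fun j : ℕ =>
        πs ((A ^ (j : ℤ) : (Fin N → ℝ) ≃ₗ[ℝ] (Fin N → ℝ)) (y (k - (j : ℤ)))))
        Filter.atTop (nhds (zs k)))
    (hz : ∀ k : ℤ, z k = zu k + zs k) :
    ∀ k : ℤ, z (k + 1) = A (z k) :=
  hyperbolic_shadowing_shift_general A Es Eu hcompl hAs hAu πs πu hπs hπu hsplit y zu zs z hzu hzs
    hz
end

section
/- Let f : X → X be a continuous map of a topological space, K a subgroup of an abelian group H acting freely and properly on a covering X̃_K → X with deck group H/K, and f̃ : X̃_K → X̃_K a lift of f satisfying f̃(x̃ + [h]) = f̃(x̃) + f̄([h]) where f̄ : H/K → H/K is an isomorphism. Then the induced map π̂ : lim← f̃ → lim← f between inverse limits, given coordinatewise by the covering projection, is surjective. -/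
/-- Lemma "covering map": if f̃ is a lift of f to a covering with deck
group H ⧸ K which is equivariant over an automorphism f̄ of H ⧸ K, then the induced map
on inverse limits is surjective. -/
theorem inverse_limit_covering_surjective {X' X : Type*}
    {H : Type*} [AddCommGroup H] (K : AddSubgroup H)
    [AddAction (H ⧸ K) X']
    (π : X' → X) (hπsurj : Function.Surjective π)
    (hπinv : ∀ (g : H ⧸ K) (a : X'), π (g +ᵥ a) = π a)
    (hfib : ∀ a b : X', π a = π b → ∃ g : H ⧸ K, g +ᵥ a = b)
    (f : X → X) (f' : X' → X')
    (hlift : ∀ a : X', π (f' a) = f (π a))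
    (fbar : (H ⧸ K) ≃+ (H ⧸ K))
    (heq : ∀ (g : H ⧸ K) (a : X'), f' (g +ᵥ a) = fbar g +ᵥ f' a) :
    ∀ s : ℕ → X, (∀ i, f (s (i + 1)) = s i) →
      ∃ t : ℕ → X', (∀ i, f' (t (i + 1)) = t i) ∧ ∀ i, π (t i) = s i := by
  intro s hs
  have step : ∀ (i : ℕ) (x : X'), π x = s i → ∃ y, f' y = x ∧ π y = s (i + 1) := by
    intro i x hx
    obtain ⟨a, ha⟩ := hπsurj (s (i + 1))
    have hpa : π (f' a) = π x := by rw [hlift, ha, hs i, hx]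
    obtain ⟨g, hg⟩ := hfib (f' a) x hpa
    refine ⟨fbar.symm g +ᵥ a, ?_, ?_⟩
    · rw [heq]; simpa using hg
    · rw [hπinv, ha]
  choose F hF1 hF2 using step
  let t : ∀ i : ℕ, {x : X' // π x = s i} := fun i =>
    Nat.rec ⟨(hπsurj (s 0)).choose, (hπsurj (s 0)).choose_spec⟩
      (fun i p => ⟨F i p.1 p.2, hF2 i p.1 p.2⟩) i
  exact ⟨fun i => (t i).1, fun i => hF1 i (t i).1 (t i).2, fun i => (t i).2⟩
end
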